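/- For the solid torus 𝕋 with ρ' = 1 and 0 < ρ < 1, the Fourier transform of its characteristic function evaluated on the z-axis satisfies χ̂(0,0,u) = 2πρ² ∫₀^{2π} sin²θ · cos(2πρu cos θ) dθ for u ∈ ℝ, and this integral equals (2πρ/u) J₁(2πρu) for u ≠ 0. -/

import Mathlib

open Real MeasureTheory intervalIntegral

def solidTorus1 (ρ : ℝ) : Set (ℝ × ℝ × ℝ) :=
  {p | (1 - Real.sqrt (p.1 ^ 2 + p.2.1 ^ 2)) ^ 2 + p.2.2 ^ 2 ≤ ρ ^ 2}

noncomputable def ftorus (ρ : ℝ) (ξ : ℝ × ℝ × ℝ) : ℂ :=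
  ∫ x : ℝ × ℝ × ℝ, (Set.indicator (solidTorus1 ρ) (fun _ => (1 : ℂ)) x) *
    Complex.exp (-(2 * π * Complex.I) *
      ((x.1 * ξ.1 + x.2.1 * ξ.2.1 + x.2.2 * ξ.2.2 : ℝ) : ℂ))

noncomputable def J1 (z : ℝ) : ℝ := (1 / π) * ∫ θ in (0 : ℝ)..π, Real.cos (θ - z * Real.sin θ)

/-!
Integrating over the horizontal slices of the torus, the slice at height `z` is the annulus
`1 - s ≤ r ≤ 1 + s` with `s = √(ρ² - z²)`, of area `4πs`. Hence
`χ̂(0,0,u) = 4π ∫ √(ρ² - z²) e^{-2πiuz} dz`; the odd part of the exponential integrates to zero,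
and `z = ρ cos θ` turns the rest into `4πρ² ∫₀^π sin²θ cos(2πρu cos θ) dθ`, whose integrand is
`π`-periodic. For the Bessel form, an integration by parts followed by the shift `θ ↦ θ + π/2`
brings `c ∫₀^π sin²θ cos(c cos θ) dθ` to `∫₀^π sin θ sin(c sin θ) dθ = π J₁(c)`.
-/

theorem intervalIntegral.integral_eq_zero_of_odd_about_midpoint {E : Type*} [NormedAddCommGroup E]
    [NormedSpace ℝ E] {f : ℝ → E} {a b : ℝ} (hf : ∀ x, f (a + b - x) = -f x) :
    ∫ x in a..b, f x = 0 := by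
  have h := integral_comp_sub_left f (a + b) (a := a) (b := b)
  simp only [hf, integral_neg, add_sub_cancel_left, add_sub_cancel_right] at h
  have h2 : (2 : ℝ) • ∫ x in a..b, f x = 0 := by
    rw [two_smul]; nth_rewrite 1 [← h]; exact neg_add_cancel _
  exact (smul_eq_zero.mp h2).resolve_left two_ne_zero

theorem integral_smul_exp_mul_I_of_even {f : ℝ → ℝ} (hf : f.Even) (hc : Continuous f) (a w : ℝ) :
    ∫ x in -a..a, f x • Complex.exp (↑(w * x) * Complex.I) =
      ↑(∫ x in -a..a, f x * cos (w * x)) := by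
  have hodd : ∫ x in -a..a, f x * sin (w * x) = 0 :=
    integral_eq_zero_of_odd_about_midpoint fun x => by
      rw [neg_add_cancel, zero_sub, hf, mul_neg, sin_neg, mul_neg]
  have hsplit : ∀ x, f x • Complex.exp (↑(w * x) * Complex.I) =
      ↑(f x * cos (w * x)) + ↑(f x * sin (w * x)) * Complex.I := by
    intro x
    rw [Complex.exp_mul_I, ← Complex.ofReal_cos, ← Complex.ofReal_sin, Complex.real_smul]
    push_cast
    ring
  simp_rw [hsplit]
  rw [intervalIntegral.integral_add, intervalIntegral.integral_mul_const,
    intervalIntegral.integral_ofReal, intervalIntegral.integral_ofReal, hodd]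
  · simp
  all_goals exact (by fun_prop : Continuous _).intervalIntegrable _ _

theorem integral_sqrt_sq_sub_sq_mul {ρ : ℝ} (hρ : 0 ≤ ρ) {g : ℝ → ℝ} (hg : Continuous g) :
    ∫ z in -ρ..ρ, √(ρ ^ 2 - z ^ 2) * g z = ρ ^ 2 * ∫ θ in 0..π, sin θ ^ 2 * g (ρ * cos θ) := by
  have hsubst := integral_comp_mul_deriv (a := 0) (b := π) (f := fun θ => ρ * cos θ)
    (f' := fun θ => -(ρ * sin θ)) (g := fun z => √(ρ ^ 2 - z ^ 2) * g z)
    (fun θ _ => by simpa using (hasDerivAt_cos θ).const_mul ρ) (by fun_prop) (by fun_prop)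
  simp only [Function.comp, cos_zero, cos_pi, mul_one, mul_neg] at hsubst
  rw [integral_symm, ← hsubst, ← intervalIntegral.integral_neg,
    ← intervalIntegral.integral_const_mul]
  refine integral_congr fun θ hθ => ?_
  rw [Set.uIcc_of_le pi_pos.le] at hθ
  have hsin : 0 ≤ ρ * sin θ := mul_nonneg hρ (sin_nonneg_of_nonneg_of_le_pi hθ.1 hθ.2)
  have hsq : ρ ^ 2 - (ρ * cos θ) ^ 2 = (ρ * sin θ) ^ 2 := by
    linear_combination -ρ ^ 2 * sin_sq_add_cos_sq θ
  simp only [hsq, sqrt_sq hsin]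
  ring

theorem volume_real_annulus {a b : ℝ} (ha : 0 ≤ a) (hab : a ≤ b) :
    volume.real {v : ℝ × ℝ | a ≤ √(v.1 ^ 2 + v.2 ^ 2) ∧ √(v.1 ^ 2 + v.2 ^ 2) ≤ b} =
      π * (b ^ 2 - a ^ 2) := by
  have hset : {v : ℝ × ℝ | a ≤ √(v.1 ^ 2 + v.2 ^ 2) ∧ √(v.1 ^ 2 + v.2 ^ 2) ≤ b} =
      Complex.measurableEquivRealProd.symm ⁻¹' (Metric.closedBall 0 b \ Metric.ball 0 a) := by
    ext v
    simp [Complex.norm_def, Complex.normSq_apply, ← sq, and_comm]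
  rw [hset, Complex.volume_preserving_equiv_real_prod.symm.measureReal_preimage
    (measurableSet_closedBall.diff measurableSet_ball).nullMeasurableSet,
    measureReal_sdiff ((Metric.ball_subset_ball hab).trans Metric.ball_subset_closedBall)
      measurableSet_ball measure_closedBall_lt_top.ne]
  simp only [measureReal_def, Complex.volume_closedBall, Complex.volume_ball, ENNReal.toReal_mul,
    ENNReal.toReal_pow, ENNReal.toReal_ofReal ha, ENNReal.toReal_ofReal (ha.trans hab),
    ENNReal.coe_toReal, NNReal.coe_real_pi]
  ring

theorem volume_real_setOf_one_sub_sq_le {c : ℝ} (hc : c ≤ 1) :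
    volume.real {v : ℝ × ℝ | (1 - √(v.1 ^ 2 + v.2 ^ 2)) ^ 2 ≤ c} = 4 * π * √c := by
  rcases lt_or_ge c 0 with hneg | hnn
  · -- both sides vanish: the set is empty and `√c = 0`
    have hempty : {v : ℝ × ℝ | (1 - √(v.1 ^ 2 + v.2 ^ 2)) ^ 2 ≤ c} = ∅ :=
      Set.eq_empty_of_forall_notMem fun v (hv : _ ≤ c) => by
        nlinarith [sq_nonneg (1 - √(v.1 ^ 2 + v.2 ^ 2))]
    simp [hempty, sqrt_eq_zero_of_nonpos hneg.le]
  · have hs : √c ≤ 1 := sqrt_le_one.mpr hc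
    have hset : {v : ℝ × ℝ | (1 - √(v.1 ^ 2 + v.2 ^ 2)) ^ 2 ≤ c} =
        {v : ℝ × ℝ | 1 - √c ≤ √(v.1 ^ 2 + v.2 ^ 2) ∧ √(v.1 ^ 2 + v.2 ^ 2) ≤ 1 + √c} := by
      ext v
      simp only [Set.mem_ofPred_eq, Real.sq_le hnn]
      constructor <;> rintro ⟨h₁, h₂⟩ <;> constructor <;> linarith
    rw [hset, volume_real_annulus (by linarith) (by linarith [sqrt_nonneg c])]
    ring

theorem integral_indicator_eq_integral_measureReal_slice {α β γ E : Type*} [MeasureSpace α]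
    [MeasureSpace β] [MeasureSpace γ] [SigmaFinite (volume : Measure α)]
    [SigmaFinite (volume : Measure β)] [SigmaFinite (volume : Measure γ)]
    [NormedAddCommGroup E] [NormedSpace ℝ E] [CompleteSpace E] {s : Set (α × β × γ)}
    (hs : MeasurableSet s) {f : γ → E} (hf : Integrable (s.indicator fun x => f x.2.2)) :
    ∫ x, s.indicator (fun x => f x.2.2) x =
      ∫ z, volume.real {v : α × β | (v.1, v.2, z) ∈ s} • f z := by
  have e := volume_preserving_prodAssoc (α₁ := α) (β₁ := β) (γ₁ := γ)
  rw [← e.integral_comp (MeasurableEquiv.measurableEmbedding _), Measure.volume_eq_prod (α × β) γ,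
    integral_prod_symm]
  · congr 1 with z
    have hslice : MeasurableSet {v : α × β | (v.1, v.2, z) ∈ s} :=
      hs.preimage (by fun_prop : Measurable fun v : α × β => (v.1, v.2, z))
    rw [← integral_indicator_const (f z) hslice]
    congr 1 with v
  · rw [← Measure.volume_eq_prod]
    exact (e.integrable_comp_emb (MeasurableEquiv.measurableEmbedding _)).2 hf

theorem volume_real_solidTorus1_slice {ρ : ℝ} (hρ : ρ ^ 2 ≤ 1) (z : ℝ) :
    volume.real {v : ℝ × ℝ | (v.1, v.2, z) ∈ solidTorus1 ρ} = 4 * π * √(ρ ^ 2 - z ^ 2) := by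
  rw [← volume_real_setOf_one_sub_sq_le (by nlinarith [sq_nonneg z])]
  congr 1 with v
  exact (le_sub_iff_add_le (a := (1 - √(v.1 ^ 2 + v.2 ^ 2)) ^ 2)).symm

theorem isCompact_solidTorus1 (ρ : ℝ) : IsCompact (solidTorus1 ρ) := by
  refine Metric.isCompact_of_isClosed_isBounded (isClosed_le (by fun_prop) continuous_const)
    ((Metric.isBounded_iff_subset_closedBall 0).2 ⟨1 + |ρ|, fun p hp => ?_⟩)
  obtain ⟨x, y, z⟩ := p
  change (1 - √(x ^ 2 + y ^ 2)) ^ 2 + z ^ 2 ≤ ρ ^ 2 at hp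
  set r := √(x ^ 2 + y ^ 2)
  have hr : |1 - r| ≤ |ρ| := sq_le_sq.mp (by nlinarith [sq_nonneg z])
  have hz : |z| ≤ |ρ| := sq_le_sq.mp (by nlinarith [sq_nonneg (1 - r)])
  have hx : |x| ≤ r := abs_le_sqrt (by nlinarith [sq_nonneg y])
  have hy : |y| ≤ r := abs_le_sqrt (by nlinarith [sq_nonneg x])
  have hr' : r ≤ 1 + |ρ| := by linarith [le_abs_self (r - 1), abs_sub_comm 1 r]
  simp only [mem_closedBall_zero_iff, Prod.norm_def, norm_eq_abs, max_le_iff]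
  exact ⟨hx.trans hr', hy.trans hr', by linarith [abs_nonneg ρ]⟩

theorem ftorus_zaxis {ρ : ℝ} (hρ0 : 0 ≤ ρ) (hρ1 : ρ ≤ 1) (u : ℝ) :
    ftorus ρ (0, 0, u) =
      ((4 * π * ρ ^ 2 * ∫ θ in 0..π, sin θ ^ 2 * cos (2 * π * ρ * u * cos θ) : ℝ) : ℂ) := by
  set E : ℝ → ℂ := fun z => Complex.exp (↑(-(2 * π * u) * z) * Complex.I)
  have hcompact := isCompact_solidTorus1 ρ
  have hftorus : ftorus ρ (0, 0, u) = ∫ x, (solidTorus1 ρ).indicator (fun x => E x.2.2) x := by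
    unfold ftorus
    congr 1 with x
    by_cases hx : x ∈ solidTorus1 ρ
    · simp only [Set.indicator_of_mem hx, one_mul, E]
      push_cast
      ring_nf
    · simp only [Set.indicator_of_notMem hx, zero_mul]
  have hsupport :
      Function.support (fun z => (4 * π * √(ρ ^ 2 - z ^ 2)) • E z) ⊆ Set.Ioc (-ρ) ρ := by
    refine Function.support_subset_iff'.2 fun z hz => ?_
    have : ρ ^ 2 - z ^ 2 ≤ 0 := by
      rw [Set.mem_Ioc, not_and_or, not_lt, not_le] at hz
      rcases hz with hz | hz <;> nlinarith
    simp [sqrt_eq_zero_of_nonpos this]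
  have hintegrable : Integrable ((solidTorus1 ρ).indicator fun x => E x.2.2) :=
    (integrable_indicator_iff hcompact.measurableSet).2 <|
      ((by fun_prop : Continuous E).comp (by fun_prop)).continuousOn.integrableOn_compact hcompact
  rw [hftorus, integral_indicator_eq_integral_measureReal_slice hcompact.measurableSet hintegrable]
  simp_rw [volume_real_solidTorus1_slice (by nlinarith)]
  rw [← intervalIntegral.integral_eq_integral_of_support_subset hsupport,
    integral_smul_exp_mul_I_of_even (fun z => by simp) (by fun_prop)]
  simp_rw [mul_assoc (4 * π)]
  rw [intervalIntegral.integral_const_mul, integral_sqrt_sq_sub_sq_mul hρ0 (by fun_prop)]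
  congr 4 with θ
  rw [neg_mul, cos_neg]
  ring_nf

theorem integral_cos_sub_mul_sin (c : ℝ) :
    ∫ θ in 0..π, cos (θ - c * sin θ) = ∫ θ in 0..π, sin θ * sin (c * sin θ) := by
  have hodd : ∫ θ in 0..π, cos θ * cos (c * sin θ) = 0 :=
    intervalIntegral.integral_eq_zero_of_odd_about_midpoint fun θ => by
      rw [zero_add, cos_pi_sub, sin_pi_sub, neg_mul]
  simp_rw [cos_sub]
  rw [intervalIntegral.integral_add, hodd, zero_add] <;>
    exact (by fun_prop : Continuous _).intervalIntegrable _ _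

theorem mul_integral_sin_sq_mul_cos_mul_cos (c : ℝ) :
    c * ∫ θ in 0..π, sin θ ^ 2 * cos (c * cos θ) = ∫ θ in 0..π, cos θ * sin (c * cos θ) := by
  have hderiv : ∀ θ, HasDerivAt (fun θ => sin θ * sin (c * cos θ))
      (cos θ * sin (c * cos θ) - c * (sin θ ^ 2 * cos (c * cos θ))) θ := fun θ =>
    ((hasDerivAt_sin θ).mul (((hasDerivAt_cos θ).const_mul c).sin)).congr_deriv (by ring)
  have hftc := intervalIntegral.integral_eq_sub_of_hasDerivAt (a := 0) (b := π)
    (fun θ _ => hderiv θ) ((by fun_prop : Continuous _).intervalIntegrable _ _)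
  rw [intervalIntegral.integral_sub, intervalIntegral.integral_const_mul] at hftc
  · simp only [sin_pi, sin_zero, zero_mul, sub_self] at hftc
    linarith
  all_goals exact (by fun_prop : Continuous _).intervalIntegrable _ _

theorem integral_cos_mul_sin_mul_cos (c : ℝ) :
    ∫ θ in 0..π, cos θ * sin (c * cos θ) = ∫ θ in 0..π, sin θ * sin (c * sin θ) := by
  have hper : Function.Periodic (fun θ => sin θ * sin (c * sin θ)) π := fun θ => by
    simp only [sin_add_pi, mul_neg, sin_neg, neg_mul, neg_neg]
  have hshift := intervalIntegral.integral_comp_add_right (fun θ => cos θ * sin (c * cos θ))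
    (π / 2) (a := -(π / 2)) (b := π / 2)
  rw [neg_add_cancel, add_halves] at hshift
  rw [← hshift]
  simp only [cos_add_pi_div_two, mul_neg, sin_neg, neg_mul, neg_neg]
  have := hper.intervalIntegral_add_eq (-(π / 2)) 0
  rwa [zero_add, show -(π / 2) + π = π / 2 by ring] at this

theorem pi_mul_J1 (c : ℝ) : π * J1 c = c * ∫ θ in 0..π, sin θ ^ 2 * cos (c * cos θ) := by
  rw [J1, mul_integral_sin_sq_mul_cos_mul_cos, integral_cos_mul_sin_mul_cos,
    ← integral_cos_sub_mul_sin]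
  field_simp

theorem stmt_11 (ρ : ℝ) (hρ0 : 0 < ρ) (hρ1 : ρ < 1) (u : ℝ) :
    ftorus ρ ((0, 0, u) : ℝ × ℝ × ℝ)
      = ((2 * π * ρ ^ 2 * ∫ θ in (0 : ℝ)..(2 * π),
          Real.sin θ ^ 2 * Real.cos (2 * π * ρ * u * Real.cos θ) : ℝ) : ℂ) ∧
    (u ≠ 0 →
      ftorus ρ ((0, 0, u) : ℝ × ℝ × ℝ) = ((2 * π * ρ / u * J1 (2 * π * ρ * u) : ℝ) : ℂ)) := by
  set c := 2 * π * ρ * u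
  have hper : Function.Periodic (fun θ => sin θ ^ 2 * cos (c * cos θ)) π := fun θ => by
    simp [sin_add_pi, cos_add_pi]
  have h2π := hper.intervalIntegral_add_zsmul_eq 2 0
    fun _ _ => (by fun_prop : Continuous _).intervalIntegrable _ _
  simp only [zero_add, zsmul_eq_mul, Int.cast_ofNat] at h2π
  rw [ftorus_zaxis hρ0.le hρ1.le u]
  refine ⟨?_, fun hu => ?_⟩
  · rw [h2π]
    push_cast
    ring
  · rw [show 2 * π * ρ / u * J1 c = 2 * ρ / u * (π * J1 c) by ring, pi_mul_J1]
    congr 1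
    simp only [c]
    field_simp
    ring
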